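/- arXiv:2110.13235 — 2 statements merged into one kernel-verified Lean document; each statement's English description precedes it below -/
import Mathlib

section
/- Let Q be an l×l real matrix with nonpositive row sums, nonnegative off-diagonal entries, and strictly negative diagonal entries, such that for every index i there is a directed path (in the digraph with edge j→k whenever Q_{jk} > 0, j ≠ k) from i to some index j whose row sum Σ_k Q_{jk} is strictly negative. Then Q is invertible. -/
/-- Lemma B.1: a matrix with nonpositive row sums, nonnegative
off-diagonal entries and strictly negative diagonal entries, such that every index
has a directed path (along strictly positive off-diagonal entries) to an index with
strictly negative row sum, is invertible. -/
theorem transient_block_invertible (l : ℕ) (Q : Matrix (Fin l) (Fin l) ℝ)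
    (hrow : ∀ i, ∑ k, Q i k ≤ 0)
    (hoff : ∀ i k, i ≠ k → 0 ≤ Q i k)
    (hdiag : ∀ i, Q i i < 0)
    (hleak : ∀ i, ∃ j, Relation.ReflTransGen (fun a b => a ≠ b ∧ 0 < Q a b) i j ∧
      ∑ k, Q j k < 0) :
    IsUnit Q := by
  rw [Matrix.isUnit_iff_isUnit_det, isUnit_iff_ne_zero]
  intro hdet
  obtain ⟨v, hvne, hv⟩ := (Matrix.exists_mulVec_eq_zero_iff).2 hdet
  -- pick an index with maximal |v|
  have hl : 0 < l := by
    rcases Nat.eq_zero_or_pos l with h | h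
    · exact absurd (funext fun k => absurd k.2 (by simp [h])) hvne
    · exact h
  obtain ⟨i, -, hi⟩ := Finset.exists_max_image Finset.univ (fun k => |v k|)
    ⟨⟨0, hl⟩, Finset.mem_univ _⟩
  set M := |v i| with hM
  have hile : ∀ k, |v k| ≤ M := fun k => hi k (Finset.mem_univ k)
  have hMpos : 0 < M := by
    by_contra h
    push_neg at h
    apply hvne
    funext k
    have hk : |v k| ≤ 0 := le_trans (hile k) h
    simpa using le_antisymm hk (abs_nonneg _)
  -- row equation at each index
  have hrowv : ∀ a : Fin l, Q a a * v a = -∑ k ∈ Finset.univ.erase a, Q a k * v k := by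
    intro a
    have h0 : ∑ k, Q a k * v k = 0 := by
      have := congrFun hv a
      simpa [Matrix.mulVec, dotProduct] using this
    have hsplit : Q a a * v a + ∑ k ∈ Finset.univ.erase a, Q a k * v k
        = ∑ k, Q a k * v k := Finset.add_sum_erase _ (fun k => Q a k * v k) (Finset.mem_univ a)
    linarith [hsplit.trans h0]
  -- the basic inequality at an index of maximal |v|
  have hbase : ∀ a : Fin l, |v a| = M →
      (-Q a a) * M ≤ ∑ k ∈ Finset.univ.erase a, Q a k * |v k| := by
    intro a ha
    have h1 : (-Q a a) * M = |Q a a * v a| := by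
      rw [abs_mul, abs_of_neg (hdiag a), ha]
    have h2 : |∑ k ∈ Finset.univ.erase a, Q a k * v k|
        ≤ ∑ k ∈ Finset.univ.erase a, Q a k * |v k| := by
      refine le_trans (Finset.abs_sum_le_sum_abs _ _) (le_of_eq ?_)
      refine Finset.sum_congr rfl fun k hk => ?_
      rw [abs_mul, abs_of_nonneg (hoff a k (Finset.ne_of_mem_erase hk).symm)]
    calc (-Q a a) * M = |Q a a * v a| := h1
      _ = |∑ k ∈ Finset.univ.erase a, Q a k * v k| := by rw [hrowv a, abs_neg]
      _ ≤ _ := h2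
  -- sum of off-diagonal entries bound
  have hoffsum : ∀ a : Fin l, ∑ k ∈ Finset.univ.erase a, Q a k ≤ -Q a a := by
    intro a
    have hsplit : Q a a + ∑ k ∈ Finset.univ.erase a, Q a k = ∑ k, Q a k :=
      Finset.add_sum_erase _ _ (Finset.mem_univ a)
    linarith [hrow a]
  -- maximality propagates along positive edges
  have hclosed : ∀ a : Fin l, |v a| = M → ∀ b, a ≠ b → 0 < Q a b → |v b| = M := by
    intro a ha b hab hQab
    have hub : ∑ k ∈ Finset.univ.erase a, Q a k * |v k|
        ≤ ∑ k ∈ Finset.univ.erase a, Q a k * M := by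
      refine Finset.sum_le_sum fun k hk => ?_
      exact mul_le_mul_of_nonneg_left (hile k) (hoff a k (Finset.ne_of_mem_erase hk).symm)
    have hub2 : ∑ k ∈ Finset.univ.erase a, Q a k * M ≤ (-Q a a) * M := by
      rw [← Finset.sum_mul]
      exact mul_le_mul_of_nonneg_right (hoffsum a) (le_of_lt hMpos)
    have heq : ∑ k ∈ Finset.univ.erase a, Q a k * (M - |v k|) ≤ 0 := by
      have := hbase a ha
      have hexp : ∑ k ∈ Finset.univ.erase a, Q a k * (M - |v k|)
          = ∑ k ∈ Finset.univ.erase a, Q a k * M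
            - ∑ k ∈ Finset.univ.erase a, Q a k * |v k| := by
        rw [← Finset.sum_sub_distrib]
        exact Finset.sum_congr rfl fun k hk => by ring
      linarith
    have hnonneg : ∀ k ∈ Finset.univ.erase a, 0 ≤ Q a k * (M - |v k|) := fun k hk =>
      mul_nonneg (hoff a k (Finset.ne_of_mem_erase hk).symm) (by linarith [hile k])
    have hzero : ∀ k ∈ Finset.univ.erase a, Q a k * (M - |v k|) = 0 := by
      have : ∑ k ∈ Finset.univ.erase a, Q a k * (M - |v k|) = 0 :=
        le_antisymm heq (Finset.sum_nonneg hnonneg)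
      exact (Finset.sum_eq_zero_iff_of_nonneg hnonneg).1 this
    have hb := hzero b (Finset.mem_erase.2 ⟨hab.symm, Finset.mem_univ b⟩)
    rcases mul_eq_zero.1 hb with h | h
    · exact absurd h (ne_of_gt hQab)
    · linarith [hile b, (by linarith : |v b| = M)]
  -- along any path from i, |v| stays maximal
  have hpathM : ∀ a b, Relation.ReflTransGen (fun a b => a ≠ b ∧ 0 < Q a b) a b →
      |v a| = M → |v b| = M := by
    intro a b h ha
    induction h with
    | refl => exact ha
    | tail _ hedge ih => exact hclosed _ ih _ hedge.1 hedge.2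
  obtain ⟨j, hpath, hjleak⟩ := hleak i
  have hjM : |v j| = M := hpathM i j hpath rfl
  -- contradiction at the leak row
  have h1 := hbase j hjM
  have hub : ∑ k ∈ Finset.univ.erase j, Q j k * |v k|
      ≤ ∑ k ∈ Finset.univ.erase j, Q j k * M := by
    refine Finset.sum_le_sum fun k hk => ?_
    exact mul_le_mul_of_nonneg_left (hile k) (hoff j k (Finset.ne_of_mem_erase hk).symm)
  have hstrict : ∑ k ∈ Finset.univ.erase j, Q j k < -Q j j := by
    have hsplit : Q j j + ∑ k ∈ Finset.univ.erase j, Q j k = ∑ k, Q j k :=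
      Finset.add_sum_erase _ _ (Finset.mem_univ j)
    linarith
  have : ∑ k ∈ Finset.univ.erase j, Q j k * M < (-Q j j) * M := by
    rw [← Finset.sum_mul]
    exact mul_lt_mul_of_pos_right hstrict hMpos
  linarith
end

section
/- Let Q be the generator matrix of a continuous-time Markov chain on a finite state space S partitioned as S = E_1 ∪ E_2, written in block form Q = [[Q_{11}, Q_{12}],[Q_{21}, Q_{22}]] (blocks indexed by E_1, E_2). Assume Q_{11} is invertible. Then the matrix Q_w := Q_{22} − Q_{21} Q_{11}^{-1} Q_{12} has nonnegative off-diagonal entries and row sums equal to zero (i.e., Q_w is itself a generator matrix). -/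
open Matrix

/-- Minimum principle for strictly diagonally dominant Z-matrices. -/
lemma zmat_min_principle {n : Type*} [Fintype n] [DecidableEq n]
    (A : Matrix n n ℝ) (hz : ∀ i j, i ≠ j → A i j ≤ 0)
    (hr : ∀ i, 0 < ∑ j, A i j)
    (x : n → ℝ) (hx : ∀ k, 0 ≤ (A.mulVec x) k) : ∀ k, 0 ≤ x k := by
  by_contra h
  push_neg at h
  obtain ⟨k, hk⟩ := h
  obtain ⟨k₀, -, hk₀⟩ := Finset.exists_min_image Finset.univ x ⟨k, Finset.mem_univ k⟩
  have hk₀neg : x k₀ < 0 := lt_of_le_of_lt (hk₀ k (Finset.mem_univ k)) hk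
  have hle : (A.mulVec x) k₀ ≤ (∑ j, A k₀ j) * x k₀ := by
    rw [Matrix.mulVec, dotProduct, Finset.sum_mul]
    apply Finset.sum_le_sum
    intro j _
    rcases eq_or_ne j k₀ with rfl | hj
    · exact le_rfl
    · exact mul_le_mul_of_nonpos_left (hk₀ j (Finset.mem_univ j)) (hz k₀ j (Ne.symm hj))
  have : (A.mulVec x) k₀ < 0 :=
    lt_of_le_of_lt hle (mul_neg_of_pos_of_neg (hr k₀) hk₀neg)
  exact absurd (hx k₀) (not_le.mpr this)

lemma zmat_strict_isUnit {n : Type*} [Fintype n] [DecidableEq n]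
    (A : Matrix n n ℝ) (hz : ∀ i j, i ≠ j → A i j ≤ 0)
    (hr : ∀ i, 0 < ∑ j, A i j) : IsUnit A := by
  rw [← Matrix.mulVec_injective_iff_isUnit]
  intro x y hxy
  have h1 : ∀ k, 0 ≤ (A.mulVec (x - y)) k := by
    intro k
    rw [Matrix.mulVec_sub, hxy]
    simp
  have h2 : ∀ k, 0 ≤ (A.mulVec (y - x)) k := by
    intro k
    rw [Matrix.mulVec_sub, hxy]
    simp
  have p1 := zmat_min_principle A hz hr _ h1
  have p2 := zmat_min_principle A hz hr _ h2
  funext k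
  have := p1 k
  have := p2 k
  simp only [Pi.sub_apply] at *
  linarith

lemma zmat_strict_inv_nonneg {n : Type*} [Fintype n] [DecidableEq n]
    (A : Matrix n n ℝ) (hz : ∀ i j, i ≠ j → A i j ≤ 0)
    (hr : ∀ i, 0 < ∑ j, A i j) : ∀ i j, 0 ≤ A⁻¹ i j := by
  intro i j
  have hU : IsUnit A := zmat_strict_isUnit A hz hr
  have hmul : A * A⁻¹ = 1 := Matrix.mul_nonsing_inv A ((Matrix.isUnit_iff_isUnit_det A).mp hU)
  have hx : ∀ k, 0 ≤ (A.mulVec (fun l => A⁻¹ l j)) k := by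
    intro k
    have : (A.mulVec (fun l => A⁻¹ l j)) k = (A * A⁻¹) k j := by
      simp [Matrix.mulVec, dotProduct, Matrix.mul_apply]
    rw [this, hmul]
    by_cases h : k = j <;> simp [Matrix.one_apply, h]
  exact zmat_min_principle A hz hr _ hx i

lemma zmat_inv_nonneg {n : Type*} [Fintype n] [DecidableEq n]
    (A : Matrix n n ℝ) (hz : ∀ i j, i ≠ j → A i j ≤ 0)
    (hr : ∀ i, 0 ≤ ∑ j, A i j) (hA : IsUnit A) : ∀ i j, 0 ≤ A⁻¹ i j := by
  intro i j
  set f : ℝ → Matrix n n ℝ := fun ε => A + ε • (1 : Matrix n n ℝ) with hf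
  have hf0 : f 0 = A := by simp [hf]
  have hfc : Continuous f := by
    apply continuous_const.add
    exact continuous_id.smul continuous_const
  have hdet : A.det ≠ 0 := by
    have := (Matrix.isUnit_iff_isUnit_det A).mp hA
    exact this.ne_zero
  -- continuity of ε ↦ (f ε)⁻¹ i j at 0
  have hcont : ContinuousAt (fun ε => ((f ε).det)⁻¹ * (f ε).adjugate i j) 0 := by
    apply ContinuousAt.mul
    · apply ContinuousAt.inv₀
      · exact (hfc.matrix_det).continuousAt
      · rw [hf0]; exact hdet
    · exact (((hfc.matrix_adjugate).matrix_elem i j)).continuousAt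
  have hformula : ∀ ε : ℝ, (f ε)⁻¹ i j = ((f ε).det)⁻¹ * (f ε).adjugate i j := by
    intro ε
    rw [Matrix.inv_def, Matrix.smul_apply, Ring.inverse_eq_inv', smul_eq_mul]
  have htend : Filter.Tendsto (fun ε => (f ε)⁻¹ i j) (nhdsWithin 0 (Set.Ioi 0)) (nhds (A⁻¹ i j)) := by
    have : Filter.Tendsto (fun ε => ((f ε).det)⁻¹ * (f ε).adjugate i j) (nhds 0)
        (nhds (((f 0).det)⁻¹ * (f 0).adjugate i j)) := hcont.tendsto
    rw [hf0] at this
    have e0 : A.det⁻¹ * A.adjugate i j = A⁻¹ i j := by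
      rw [Matrix.inv_def, Matrix.smul_apply, Ring.inverse_eq_inv', smul_eq_mul]
    rw [e0] at this
    simp only [hformula]
    exact this.mono_left nhdsWithin_le_nhds
  apply ge_of_tendsto htend
  apply Filter.eventually_of_mem self_mem_nhdsWithin
  intro ε hε
  have hε' : (0:ℝ) < ε := hε
  apply zmat_strict_inv_nonneg
  · intro a b hab
    simp [hf, Matrix.one_apply_ne hab]
    exact hz a b hab
  · intro a
    have : ∑ b, (f ε) a b = (∑ b, A a b) + ε := by
      simp [hf, Finset.sum_add_distrib, Matrix.one_apply]
    rw [this]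
    have := hr a
    linarith

/-- if `Q` is a generator matrix on `E₁ ⊕ E₂` written in block form and
`Q₁₁` is invertible, then the watched-chain matrix `Q_w = Q₂₂ − Q₂₁ Q₁₁⁻¹ Q₁₂` has
nonnegative off-diagonal entries and zero row sums, i.e. is itself a generator. -/
theorem watched_chain_generator
    (E1 E2 : Type*) [Fintype E1] [Fintype E2] [DecidableEq E1] [DecidableEq E2]
    (Q : Matrix (E1 ⊕ E2) (E1 ⊕ E2) ℝ)
    (hoff : ∀ i j, i ≠ j → 0 ≤ Q i j)
    (hrow : ∀ i, ∑ j, Q i j = 0)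
    (Q11 : Matrix E1 E1 ℝ) (hQ11 : Q11 = fun i j => Q (Sum.inl i) (Sum.inl j))
    (Q12 : Matrix E1 E2 ℝ) (hQ12 : Q12 = fun i j => Q (Sum.inl i) (Sum.inr j))
    (Q21 : Matrix E2 E1 ℝ) (hQ21 : Q21 = fun i j => Q (Sum.inr i) (Sum.inl j))
    (Q22 : Matrix E2 E2 ℝ) (hQ22 : Q22 = fun i j => Q (Sum.inr i) (Sum.inr j))
    (hinv : IsUnit Q11) :
    (∀ i j, i ≠ j → 0 ≤ (Q22 - Q21 * Q11⁻¹ * Q12) i j) ∧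
    (∀ i, ∑ j, (Q22 - Q21 * Q11⁻¹ * Q12) i j = 0) := by
  have hdet : IsUnit Q11.det := (Matrix.isUnit_iff_isUnit_det Q11).mp hinv
  -- nonnegativity of blocks
  have h12 : ∀ k l, 0 ≤ Q12 k l := by
    intro k l; rw [hQ12]; exact hoff _ _ (by simp)
  have h21 : ∀ k l, 0 ≤ Q21 k l := by
    intro k l; rw [hQ21]; exact hoff _ _ (by simp)
  -- row sums relations
  have hs1 : ∀ k, ∑ j, Q12 k j = -∑ l, Q11 k l := by
    intro k
    have h := hrow (Sum.inl k)
    rw [Fintype.sum_sum_type] at h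
    simp only [hQ11, hQ12] at h ⊢
    linarith
  have hs2 : ∀ k, ∑ l, Q21 k l + ∑ j, Q22 k j = 0 := by
    intro k
    have h := hrow (Sum.inr k)
    rw [Fintype.sum_sum_type] at h
    simp only [hQ21, hQ22]
    exact h
  -- the M-matrix part: N := (-Q11)⁻¹ is entrywise nonnegative
  set N : Matrix E1 E1 ℝ := (-Q11)⁻¹ with hNdef
  have hN : ∀ k l, 0 ≤ N k l := by
    apply zmat_inv_nonneg
    · intro a b hab
      simp only [Matrix.neg_apply, neg_nonpos]
      rw [hQ11]
      exact hoff _ _ (by simp [hab])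
    · intro a
      have := hs1 a
      have h12a : 0 ≤ ∑ j, Q12 a j := Finset.sum_nonneg fun j _ => h12 a j
      simp only [Matrix.neg_apply]
      rw [Finset.sum_neg_distrib]
      linarith
    · exact hinv.neg
  have hinvrel : Q11⁻¹ = -N := by
    have h1 : (-Q11) * (-(Q11⁻¹)) = 1 := by
      rw [neg_mul_neg, Matrix.mul_nonsing_inv _ hdet]
    rw [hNdef, Matrix.inv_eq_right_inv h1, neg_neg]
  have key : Q21 * Q11⁻¹ * Q12 = -(Q21 * N * Q12) := by
    rw [hinvrel, Matrix.mul_neg, Matrix.neg_mul]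
  constructor
  · intro i j hij
    rw [key, Matrix.sub_apply, Matrix.neg_apply, sub_neg_eq_add]
    have h22 : 0 ≤ Q22 i j := by
      rw [hQ22]; exact hoff _ _ (by simp [hij])
    have hprod : 0 ≤ (Q21 * N * Q12) i j := by
      rw [Matrix.mul_apply]
      apply Finset.sum_nonneg
      intro k _
      apply mul_nonneg _ (h12 k j)
      rw [Matrix.mul_apply]
      exact Finset.sum_nonneg fun l _ => mul_nonneg (h21 i l) (hN l k)
    linarith
  · intro i
    have hM : ∑ j, (Q21 * Q11⁻¹ * Q12) i j = -∑ l, Q21 i l := by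
      calc ∑ j, (Q21 * Q11⁻¹ * Q12) i j
          = ∑ j, ∑ k, (Q21 * Q11⁻¹) i k * Q12 k j := by
            simp [Matrix.mul_apply]
        _ = ∑ k, (Q21 * Q11⁻¹) i k * ∑ j, Q12 k j := by
            rw [Finset.sum_comm]
            simp [Finset.mul_sum]
        _ = ∑ k, (Q21 * Q11⁻¹) i k * (-∑ l, Q11 k l) := by
            refine Finset.sum_congr rfl fun k _ => ?_
            rw [hs1 k]
        _ = -∑ k, ∑ l, (Q21 * Q11⁻¹) i k * Q11 k l := by
            simp [Finset.mul_sum]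
        _ = -∑ l, ∑ k, (Q21 * Q11⁻¹) i k * Q11 k l := by
            rw [Finset.sum_comm]
        _ = -∑ l, (Q21 * Q11⁻¹ * Q11) i l := by
            simp [Matrix.mul_apply]
        _ = -∑ l, Q21 i l := by
            rw [Matrix.mul_assoc, Matrix.nonsing_inv_mul _ hdet, Matrix.mul_one]
    have := hs2 i
    simp only [Matrix.sub_apply, Finset.sum_sub_distrib, hM]
    linarith
end
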